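/- arXiv:2009.06106 — 3 statements merged into one kernel-verified Lean document; each statement's English description precedes it below -/
import Mathlib

section
/- Let x be strictly feasible for Ax ≥ b, let δ_x = −H(x)⁻¹∇f_t(x) be the Newton step for f_t(x) = t·cᵀx − Σᵢ ln(aᵢᵀx − bᵢ), and suppose x + δ_x is also strictly feasible with H(x + δ_x) invertible. Then ‖∇f_t(x + δ_x)‖_{H(x+δ_x)⁻¹} ≤ ‖∇f_t(x)‖_{H(x)⁻¹}². -/
open Matrix

/-- The local norm `‖v‖_M = √(vᵀ M v)`. -/
noncomputable def mnorm {n : ℕ} (M : Matrix (Fin n) (Fin n) ℝ) (v : Fin n → ℝ) : ℝ :=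
  Real.sqrt (v ⬝ᵥ M.mulVec v)

/-- The barrier Hessian `H(x) = Σᵢ aᵢaᵢᵀ/sᵢ(x)²`. -/
noncomputable def barrierHess {m n : ℕ} (A : Matrix (Fin m) (Fin n) ℝ) (b : Fin m → ℝ)
    (x : Fin n → ℝ) : Matrix (Fin n) (Fin n) ℝ :=
  ∑ i, ((A.mulVec x i - b i) ^ 2)⁻¹ • vecMulVec (fun j => A i j) (fun j => A i j)

/-- The gradient `∇f_t(x) = t·c − Σᵢ aᵢ/sᵢ(x)` of the penalized objective. -/
noncomputable def penGrad {m n : ℕ} (A : Matrix (Fin m) (Fin n) ℝ) (b : Fin m → ℝ)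
    (c : Fin n → ℝ) (t : ℝ) (x : Fin n → ℝ) : Fin n → ℝ :=
  fun j => t * c j - ∑ i, A i j / (A.mulVec x i - b i)

/-!
Write `Bₓ = S(x)⁻¹A` for the matrix with rows `aᵢ/sᵢ(x)`, so that `H(x) = BₓᵀBₓ`, and put
`z = Bₓδ`. The Newton equation `H(x)δ = −∇f_t(x)` gives `Φ_t(x)² = δᵀH(x)δ = ‖z‖²`; expanding
`1/sᵢ(x + δ)` around `x` and using it once more gives `∇f_t(x + δ) = −B_{x+δ}ᵀ(z ∘ z)`.
Since `‖Bᵀr‖_{(BᵀB)⁻¹} ≤ ‖r‖` for every `B` (Cauchy–Schwarz), we get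
`Φ_t(x + δ)² ≤ Σ zᵢ⁴ ≤ (Σ zᵢ²)² = Φ_t(x)⁴`.
-/

open Finset

namespace Matrix

theorem dotProduct_transpose_mul_self_inv_le {R m n : Type*} [Field R] [LinearOrder R]
    [IsStrictOrderedRing R] [Fintype m] [Fintype n] [DecidableEq n] (B : Matrix m n R)
    (r : m → R) :
    Bᵀ *ᵥ r ⬝ᵥ (Bᵀ * B)⁻¹ *ᵥ (Bᵀ *ᵥ r) ≤ r ⬝ᵥ r := by
  have hrr : 0 ≤ r ⬝ᵥ r := sum_nonneg fun i _ => mul_self_nonneg (r i)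
  by_cases hM : IsUnit (Bᵀ * B).det
  swap
  · rwa [nonsing_inv_apply_not_isUnit _ hM, zero_mulVec, dotProduct_zero]
  set u := (Bᵀ * B)⁻¹ *ᵥ (Bᵀ *ᵥ r)
  have hw : Bᵀ *ᵥ r ⬝ᵥ u = r ⬝ᵥ B *ᵥ u := by
    rw [mulVec_transpose]
    exact (dotProduct_mulVec r B u).symm
  have hBu : B *ᵥ u ⬝ᵥ B *ᵥ u = Bᵀ *ᵥ r ⬝ᵥ u := by
    rw [dotProduct_comm, dotProduct_mulVec, ← mulVec_transpose, mulVec_mulVec,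
      mulVec_mulVec, mul_nonsing_inv _ hM, one_mulVec]
  have hCS : (r ⬝ᵥ B *ᵥ u) ^ 2 ≤ (r ⬝ᵥ r) * (B *ᵥ u ⬝ᵥ B *ᵥ u) := by
    simpa only [dotProduct, ← sq] using sum_mul_sq_le_sq_mul_sq univ r (B *ᵥ u)
  rw [hw] at hBu ⊢
  have hw0 : 0 ≤ r ⬝ᵥ B *ᵥ u := hBu ▸ sum_nonneg fun i _ => mul_self_nonneg ((B *ᵥ u) i)
  rw [hBu] at hCS
  nlinarith

theorem mul_self_dotProduct_mul_self_le_sq {R m : Type*} [CommRing R] [LinearOrder R]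
    [IsStrictOrderedRing R] [Fintype m] (z : m → R) : (z * z) ⬝ᵥ (z * z) ≤ (z ⬝ᵥ z) ^ 2 := by
  simpa only [dotProduct, Pi.mul_apply, ← sq] using
    sum_sq_le_sq_sum_of_nonneg fun i (_ : i ∈ univ) => mul_self_nonneg (z i)

end Matrix

section Barrier

variable {m n : ℕ} (A : Matrix (Fin m) (Fin n) ℝ) (b : Fin m → ℝ)

noncomputable def scaledConstraints (x : Fin n → ℝ) : Matrix (Fin m) (Fin n) ℝ :=
  Matrix.of fun i j => A i j / (A.mulVec x i - b i)

theorem scaledConstraints_apply (x : Fin n → ℝ) (i : Fin m) (j : Fin n) :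
    scaledConstraints A b x i j = A i j / (A.mulVec x i - b i) := rfl

theorem scaledConstraints_mulVec (x δ : Fin n → ℝ) (i : Fin m) :
    (scaledConstraints A b x).mulVec δ i = A.mulVec δ i / (A.mulVec x i - b i) := by
  simp only [scaledConstraints, mulVec, dotProduct, of_apply, sum_div]
  exact sum_congr rfl fun j _ => by ring

theorem barrierHess_eq_transpose_mul (x : Fin n → ℝ) :
    barrierHess A b x = (scaledConstraints A b x)ᵀ * scaledConstraints A b x := by
  ext j k
  simp only [barrierHess, scaledConstraints_apply, Matrix.sum_apply, Matrix.smul_apply,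
    vecMulVec_apply, smul_eq_mul, mul_apply, transpose_apply]
  exact sum_congr rfl fun i _ => by rw [← inv_pow]; ring

theorem dotProduct_barrierHess_mulVec (x δ : Fin n → ℝ) :
    δ ⬝ᵥ (barrierHess A b x).mulVec δ =
      scaledConstraints A b x *ᵥ δ ⬝ᵥ scaledConstraints A b x *ᵥ δ := by
  rw [barrierHess_eq_transpose_mul, ← mulVec_mulVec, dotProduct_mulVec, vecMul_transpose]

theorem penGrad_add_of_barrierHess_mulVec (c : Fin n → ℝ) (t : ℝ) (x δ : Fin n → ℝ)
    (hs : ∀ i, A.mulVec x i - b i ≠ 0) (hs' : ∀ i, A.mulVec (x + δ) i - b i ≠ 0)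
    (hN : (barrierHess A b x).mulVec δ = -penGrad A b c t x) :
    penGrad A b c t (x + δ) = (scaledConstraints A b (x + δ))ᵀ *ᵥ
      -(scaledConstraints A b x *ᵥ δ * scaledConstraints A b x *ᵥ δ) := by
  ext j
  have hj := congrFun hN j
  rw [barrierHess_eq_transpose_mul, ← mulVec_mulVec] at hj
  simp only [penGrad, scaledConstraints_apply, mulVec_transpose, vecMul, dotProduct,
    Pi.neg_apply, Pi.mul_apply, neg_mul, sum_neg_distrib] at hj ⊢
  set z := scaledConstraints A b x *ᵥ δ
  -- `1/(s + d) = 1/s − d/s² + d²/(s²(s + d))`, with `sᵢ(x + δ) = sᵢ(x) + (Aδ)ᵢ`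
  have hexpand : ∀ i, A i j / (A.mulVec (x + δ) i - b i) =
      A i j / (A.mulVec x i - b i) - z i * (A i j / (A.mulVec x i - b i)) +
        z i * z i * (A i j / (A.mulVec (x + δ) i - b i)) := by
    intro i
    have hsi := hs i
    have hs'i := hs' i
    simp only [z, scaledConstraints_mulVec]
    rw [mulVec_add, Pi.add_apply, add_sub_right_comm] at hs'i ⊢
    field_simp
    ring
  rw [sum_congr rfl fun i _ => hexpand i, sum_add_distrib, sum_sub_distrib]
  linarith

end Barrier

theorem newton_quadratic_convergence_general {m n : ℕ} (A : Matrix (Fin m) (Fin n) ℝ)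
    (b : Fin m → ℝ) (c : Fin n → ℝ) (t : ℝ) (x : Fin n → ℝ)
    (hfeas : ∀ i, b i < A.mulVec x i)
    (hHx : (barrierHess A b x).PosDef)
    (δ : Fin n → ℝ) (hδ : δ = -(barrierHess A b x)⁻¹.mulVec (penGrad A b c t x))
    (hfeas' : ∀ i, b i < A.mulVec (x + δ) i) :
    mnorm (barrierHess A b (x + δ))⁻¹ (penGrad A b c t (x + δ)) ≤
      (mnorm (barrierHess A b x)⁻¹ (penGrad A b c t x)) ^ 2 := by
  set g := penGrad A b c t x
  set z := scaledConstraints A b x *ᵥ δ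
  have hN : (barrierHess A b x).mulVec δ = -g := by
    rw [hδ, mulVec_neg, mulVec_mulVec, mul_nonsing_inv _ hHx.det_pos.ne'.isUnit, one_mulVec]
  have hΦ : g ⬝ᵥ (barrierHess A b x)⁻¹ *ᵥ g = z ⬝ᵥ z := by
    rw [← neg_neg ((barrierHess A b x)⁻¹ *ᵥ g), ← hδ, dotProduct_neg, ← neg_dotProduct, ← hN,
      dotProduct_comm, dotProduct_barrierHess_mulVec]
  have hz : 0 ≤ z ⬝ᵥ z := sum_nonneg fun i _ => mul_self_nonneg (z i)
  rw [mnorm, mnorm, hΦ, Real.sq_sqrt hz, barrierHess_eq_transpose_mul,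
    penGrad_add_of_barrierHess_mulVec A b c t x δ (fun i => (sub_pos.2 (hfeas i)).ne')
      (fun i => (sub_pos.2 (hfeas' i)).ne') hN]
  calc _ ≤ √(-(z * z) ⬝ᵥ -(z * z)) :=
        Real.sqrt_le_sqrt (dotProduct_transpose_mul_self_inv_le _ _)
    _ ≤ √((z ⬝ᵥ z) ^ 2) := by
      rw [neg_dotProduct_neg]
      exact Real.sqrt_le_sqrt (mul_self_dotProduct_mul_self_le_sq z)
    _ = z ⬝ᵥ z := Real.sqrt_sq hz

/-- Quadratic convergence of one Newton step for the potential
`Φ_t(x) = ‖∇f_t(x)‖_{H(x)⁻¹}`: if `x` is strictly feasible,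
`δ_x = −H(x)⁻¹∇f_t(x)` and `x + δ_x` is also strictly feasible with invertible
Hessian, then `Φ_t(x + δ_x) ≤ Φ_t(x)²`. -/
theorem newton_quadratic_convergence {m n : ℕ} (A : Matrix (Fin m) (Fin n) ℝ)
    (b : Fin m → ℝ) (c : Fin n → ℝ) (t : ℝ) (ht : 0 < t) (x : Fin n → ℝ)
    (hfeas : ∀ i, b i < A.mulVec x i)
    (hHx : (barrierHess A b x).PosDef)
    (δ : Fin n → ℝ) (hδ : δ = -(barrierHess A b x)⁻¹.mulVec (penGrad A b c t x))
    (hfeas' : ∀ i, b i < A.mulVec (x + δ) i)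
    (hHx' : (barrierHess A b (x + δ)).PosDef) :
    mnorm (barrierHess A b (x + δ))⁻¹ (penGrad A b c t (x + δ)) ≤
      (mnorm (barrierHess A b x)⁻¹ (penGrad A b c t x)) ^ 2 :=
  newton_quadratic_convergence_general A b c t x hfeas hHx δ hδ hfeas'
end

section
/- Let A be a symmetric positive definite matrix, δ ∈ (0, 1/2), and P a symmetric matrix with (1−δ)A ⪯ P ⪯ (1+δ)A. Then P is positive definite and for every x ∈ ℝⁿ, ‖P⁻¹Ax − x‖_A ≤ 2δ·‖x‖_A. -/
open Matrix

/-- Loewner order `A ⪯ B`. -/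
def PSDle {n : ℕ} (A B : Matrix (Fin n) (Fin n) ℝ) : Prop := (B - A).PosSemidef

/-!
Write `E = A - P`. The sandwich `(1-δ)A ⪯ P ⪯ (1+δ)A` says `|wᵀEw| ≤ δ‖w‖²_A`, and by polarization
this upgrades to the Cauchy–Schwarz-type bound `uᵀEv ≤ δ‖u‖_A‖v‖_A`. For `y = P⁻¹Ax - x` we have
`Py = Ex`, hence `(1-δ)‖y‖²_A ≤ yᵀPy = yᵀEx ≤ δ‖y‖_A‖x‖_A`, i.e. `‖y‖_A ≤ δ/(1-δ)·‖x‖_A ≤ 2δ‖x‖_A`.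
-/

namespace Matrix

variable {m : Type*} [Fintype m]

lemma parallelogram_dotProduct_mulVec (M : Matrix m m ℝ) (u v : m → ℝ) :
    (u + v) ⬝ᵥ M *ᵥ (u + v) + (u - v) ⬝ᵥ M *ᵥ (u - v) =
      2 * (u ⬝ᵥ M *ᵥ u + v ⬝ᵥ M *ᵥ v) := by
  simp only [mulVec_add, mulVec_sub, dotProduct_add, dotProduct_sub, add_dotProduct,
    sub_dotProduct]
  ring

lemma IsSymm.polarization_dotProduct_mulVec {M : Matrix m m ℝ} (hM : M.IsSymm) (u v : m → ℝ) :
    (u + v) ⬝ᵥ M *ᵥ (u + v) - (u - v) ⬝ᵥ M *ᵥ (u - v) = 4 * (u ⬝ᵥ M *ᵥ v) := by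
  have hvu : v ⬝ᵥ M *ᵥ u = u ⬝ᵥ M *ᵥ v := by
    rw [dotProduct_mulVec, ← mulVec_transpose, hM.eq, dotProduct_comm]
  simp only [mulVec_add, mulVec_sub, dotProduct_add, dotProduct_sub, add_dotProduct,
    sub_dotProduct, hvu]
  ring

lemma IsSymm.two_mul_dotProduct_mulVec_le {E A : Matrix m m ℝ} {c : ℝ} (hE : E.IsSymm)
    (h : ∀ w, |w ⬝ᵥ E *ᵥ w| ≤ c * (w ⬝ᵥ A *ᵥ w)) (u v : m → ℝ) :
    2 * (u ⬝ᵥ E *ᵥ v) ≤ c * (u ⬝ᵥ A *ᵥ u + v ⬝ᵥ A *ᵥ v) := by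
  have hpol := hE.polarization_dotProduct_mulVec u v
  have hpar := A.parallelogram_dotProduct_mulVec u v
  have hadd := (abs_le.1 (h (u + v))).2
  have hsub := (abs_le.1 (h (u - v))).1
  linear_combination (hadd + hsub - hpol + c * hpar) / 2

end Matrix

lemma sq_mnorm {n : ℕ} {A : Matrix (Fin n) (Fin n) ℝ} (hA : A.PosSemidef) (v : Fin n → ℝ) :
    mnorm A v ^ 2 = v ⬝ᵥ A *ᵥ v :=
  Real.sq_sqrt (by simpa using hA.dotProduct_mulVec_nonneg v)

lemma mnorm_pos {n : ℕ} {A : Matrix (Fin n) (Fin n) ℝ} (hA : A.PosDef) {v : Fin n → ℝ}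
    (hv : v ≠ 0) : 0 < mnorm A v :=
  Real.sqrt_pos.2 (by simpa using hA.dotProduct_mulVec_pos hv)

lemma dotProduct_mulVec_le_mul_mnorm_mul_mnorm {n : ℕ} {E A : Matrix (Fin n) (Fin n) ℝ} {c : ℝ}
    (hA : A.PosDef) (hE : E.IsSymm) (h : ∀ w, |w ⬝ᵥ E *ᵥ w| ≤ c * (w ⬝ᵥ A *ᵥ w))
    (u v : Fin n → ℝ) : u ⬝ᵥ E *ᵥ v ≤ c * mnorm A u * mnorm A v := by
  rcases eq_or_ne u 0 with rfl | hu
  · simp [mnorm]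
  rcases eq_or_ne v 0 with rfl | hv
  · simp [mnorm]
  set a := mnorm A u
  set b := mnorm A v
  have hab : 0 < a * b := mul_pos (mnorm_pos hA hu) (mnorm_pos hA hv)
  -- scaling `u` by `‖v‖_A` and `v` by `‖u‖_A` balances the two sides of the AM–GM bound
  have key := hE.two_mul_dotProduct_mulVec_le h (b • u) (a • v)
  simp only [mulVec_smul, dotProduct_smul, smul_dotProduct, smul_eq_mul,
    ← sq_mnorm hA.posSemidef] at key
  refine le_of_mul_le_mul_left ?_ hab
  nlinarith

lemma PSDle.dotProduct_mulVec_le {n : ℕ} {A B : Matrix (Fin n) (Fin n) ℝ} (h : PSDle A B)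
    (w : Fin n → ℝ) : w ⬝ᵥ A *ᵥ w ≤ w ⬝ᵥ B *ᵥ w := by
  have := h.dotProduct_mulVec_nonneg w
  rw [star_trivial, sub_mulVec, dotProduct_sub] at this
  linarith

lemma abs_dotProduct_sub_mulVec_le_of_PSDle {n : ℕ} {A P : Matrix (Fin n) (Fin n) ℝ} {δ : ℝ}
    (h₁ : PSDle ((1 - δ) • A) P) (h₂ : PSDle P ((1 + δ) • A)) (w : Fin n → ℝ) :
    |w ⬝ᵥ (A - P) *ᵥ w| ≤ δ * (w ⬝ᵥ A *ᵥ w) := by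
  have hlo := h₁.dotProduct_mulVec_le w
  have hhi := h₂.dotProduct_mulVec_le w
  simp only [smul_mulVec, dotProduct_smul, smul_eq_mul, sub_mulVec, dotProduct_sub] at *
  rw [abs_le]
  constructor <;> linarith

lemma posDef_of_PSDle {n : ℕ} {A P : Matrix (Fin n) (Fin n) ℝ} {δ : ℝ} (hA : A.PosDef)
    (hδ : δ < 1) (hP : P.IsSymm) (h : PSDle ((1 - δ) • A) P) : P.PosDef := by
  refine .of_dotProduct_mulVec_pos (isHermitian_iff_isSymm.2 hP) fun x hx => ?_
  have hAx := hA.dotProduct_mulVec_pos hx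
  have hle := h.dotProduct_mulVec_le x
  rw [smul_mulVec, dotProduct_smul, smul_eq_mul] at hle
  rw [star_trivial] at *
  nlinarith

/-- A δ-spectral approximation is a 2δ-preconditioner: if `A` is symmetric positive
definite, `δ ∈ (0,1/2)`, and `P` is symmetric with `(1−δ)A ⪯ P ⪯ (1+δ)A`, then `P`
is positive definite and `‖P⁻¹Ax − x‖_A ≤ 2δ‖x‖_A` for all `x`. -/
theorem spectral_approx_preconditioner {n : ℕ} (A P : Matrix (Fin n) (Fin n) ℝ)
    (hA : A.PosDef) (δ : ℝ) (hδ : 0 < δ) (hδ' : δ < 1 / 2) (hP : P.IsSymm)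
    (h₁ : PSDle ((1 - δ) • A) P) (h₂ : PSDle P ((1 + δ) • A)) :
    P.PosDef ∧ ∀ x : Fin n → ℝ,
      mnorm A (P⁻¹.mulVec (A.mulVec x) - x) ≤ 2 * δ * mnorm A x := by
  have hPpd : P.PosDef := posDef_of_PSDle hA (by linarith) hP h₁
  refine ⟨hPpd, fun x => ?_⟩
  set y := P⁻¹ *ᵥ (A *ᵥ x) - x
  have hPy : P *ᵥ y = (A - P) *ᵥ x := by
    rw [mulVec_sub, mulVec_mulVec, mul_nonsing_inv P (isUnit_iff_ne_zero.2 hPpd.det_pos.ne'),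
      one_mulVec, sub_mulVec]
  have hAP : (A - P).IsSymm := (isHermitian_iff_isSymm.1 hA.isHermitian).sub hP
  have hlo : (1 - δ) * mnorm A y ^ 2 ≤ δ * mnorm A y * mnorm A x := by
    calc (1 - δ) * mnorm A y ^ 2 ≤ y ⬝ᵥ P *ᵥ y := by
          simpa [sq_mnorm hA.posSemidef, smul_mulVec] using h₁.dotProduct_mulVec_le y
      _ = y ⬝ᵥ (A - P) *ᵥ x := by rw [hPy]
      _ ≤ δ * mnorm A y * mnorm A x :=
          dotProduct_mulVec_le_mul_mnorm_mul_mnorm hA hAP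
            (abs_dotProduct_sub_mulVec_le_of_PSDle h₁ h₂) y x
  have hx : 0 ≤ mnorm A x := Real.sqrt_nonneg _
  by_contra! hlt
  have hy : 0 < mnorm A y := lt_of_le_of_lt (by positivity) hlt
  nlinarith [mul_lt_mul_of_pos_left hlt (mul_pos (by linarith : (0:ℝ) < 1 - δ) hy),
    mul_nonneg (mul_nonneg (by linarith : (0:ℝ) ≤ 1 - 2 * δ) hδ.le) (mul_nonneg hy.le hx)]
end

section
/- Let L_G be the Laplacian of a weighted graph G, D ≻ 0 a diagonal matrix, and A = L_G + D. If H is a δ-spectral sparsifier of G with δ ∈ (0, 1/2), then P := L_H + D is positive definite and satisfies ‖P⁻¹Ax − x‖_A ≤ 2δ‖x‖_A for all x ∈ ℝⁿ. -/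
/-!
Write `E = P - A`, so `|zᵀ E z| ≤ δ ‖z‖_A²` for all `z`; since `E` is symmetric, polarization and
a discriminant argument upgrade this to `|yᵀ E x| ≤ δ ‖y‖_A ‖x‖_A`. The error `y = P⁻¹ A x - x`
satisfies `P y = -E x`, hence `(1 - δ) ‖y‖_A² ≤ yᵀ P y = -yᵀ E x ≤ δ ‖y‖_A ‖x‖_A`, i.e.
`‖y‖_A ≤ δ / (1 - δ) ‖x‖_A ≤ 2 δ ‖x‖_A` for `δ ≤ 1/2`.
-/

open Matrix

namespace Matrix
variable {ι : Type*} [Fintype ι]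

lemma IsSymm.dotProduct_mulVec_comm {E : Matrix ι ι ℝ} (hE : E.IsSymm) (x y : ι → ℝ) :
    x ⬝ᵥ E *ᵥ y = y ⬝ᵥ E *ᵥ x := by
  rw [dotProduct_mulVec, ← mulVec_transpose, hE.eq, dotProduct_comm]

theorem sq_dotProduct_mulVec_le_of_abs_le {E A : Matrix ι ι ℝ} (hE : E.IsSymm) {δ : ℝ}
    (h : ∀ z, |z ⬝ᵥ E *ᵥ z| ≤ δ * (z ⬝ᵥ A *ᵥ z)) (x y : ι → ℝ) :
    (x ⬝ᵥ E *ᵥ y) ^ 2 ≤ δ ^ 2 * (x ⬝ᵥ A *ᵥ x) * (y ⬝ᵥ A *ᵥ y) := by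
  -- Polarizing the bound at `t • x ± y` makes this quadratic in `t` nonnegative.
  have hquad : ∀ t : ℝ,
      0 ≤ δ * (x ⬝ᵥ A *ᵥ x) * (t * t) + (-2 * (x ⬝ᵥ E *ᵥ y)) * t + δ * (y ⬝ᵥ A *ᵥ y) := by
    intro t
    have hplus := (abs_le.mp (h (t • x + y))).2
    have hminus := (abs_le.mp (h (t • x - y))).1
    simp only [mulVec_add, mulVec_sub, mulVec_smul, dotProduct_add, add_dotProduct,
      dotProduct_sub, sub_dotProduct, smul_dotProduct, dotProduct_smul, smul_eq_mul,
      hE.dotProduct_mulVec_comm y x] at hplus hminus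
    linarith
  have := discrim_le_zero hquad
  rw [discrim] at this
  linarith

def IsSpectralApprox (δ : ℝ) (G H : Matrix ι ι ℝ) : Prop :=
  ∀ x : ι → ℝ, (1 - δ) * (x ⬝ᵥ G *ᵥ x) ≤ x ⬝ᵥ H *ᵥ x ∧ x ⬝ᵥ H *ᵥ x ≤ (1 + δ) * (x ⬝ᵥ G *ᵥ x)

namespace IsSpectralApprox
variable {δ : ℝ} {G H : Matrix ι ι ℝ}

theorem add_posSemidef (h : IsSpectralApprox δ G H) {D : Matrix ι ι ℝ} (hD : D.PosSemidef)
    (hδ : 0 ≤ δ) : IsSpectralApprox δ (G + D) (H + D) := by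
  intro x
  have hDx : 0 ≤ x ⬝ᵥ D *ᵥ x := by simpa using hD.dotProduct_mulVec_nonneg x
  simp only [add_mulVec, dotProduct_add]
  constructor <;> nlinarith [h x]

theorem abs_sub_le (h : IsSpectralApprox δ G H) (x : ι → ℝ) :
    |x ⬝ᵥ (H - G) *ᵥ x| ≤ δ * (x ⬝ᵥ G *ᵥ x) := by
  rw [sub_mulVec, dotProduct_sub, abs_le]
  constructor <;> linarith [h x]

theorem sq_dotProduct_sub_mulVec_le (h : IsSpectralApprox δ G H) (hG : G.IsSymm) (hH : H.IsSymm)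
    (x y : ι → ℝ) :
    (x ⬝ᵥ (H - G) *ᵥ y) ^ 2 ≤ δ ^ 2 * (x ⬝ᵥ G *ᵥ x) * (y ⬝ᵥ G *ᵥ y) :=
  sq_dotProduct_mulVec_le_of_abs_le (hH.sub hG) h.abs_sub_le x y

theorem mnorm_inv_mulVec_sub_le {n : ℕ} {A P : Matrix (Fin n) (Fin n) ℝ}
    (h : IsSpectralApprox δ A P) (hA : A.IsSymm) (hP : P.IsSymm) (hPu : IsUnit P.det)
    (hδ : 0 ≤ δ) (hδ1 : δ < 1) (x : Fin n → ℝ) :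
    mnorm A (P⁻¹ *ᵥ (A *ᵥ x) - x) ≤ δ / (1 - δ) * mnorm A x := by
  set y := P⁻¹ *ᵥ (A *ᵥ x) - x
  have hk : 0 ≤ δ / (1 - δ) := div_nonneg hδ (by linarith)
  obtain hy | hy := le_or_gt (y ⬝ᵥ A *ᵥ y) 0
  · rw [mnorm, Real.sqrt_eq_zero'.mpr hy]
    exact mul_nonneg hk (Real.sqrt_nonneg _)
  have hPy : P *ᵥ y = -((P - A) *ᵥ x) := by
    rw [mulVec_sub, mulVec_mulVec, mul_nonsing_inv _ hPu, one_mulVec, sub_mulVec, neg_sub]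
  have hlow : (1 - δ) * (y ⬝ᵥ A *ᵥ y) ≤ -(y ⬝ᵥ (P - A) *ᵥ x) := by
    simpa only [hPy, dotProduct_neg] using (h y).1
  have hcs := h.sq_dotProduct_sub_mulVec_le hA hP y x
  have hsq : (1 - δ) ^ 2 * (y ⬝ᵥ A *ᵥ y) ≤ δ ^ 2 * (x ⬝ᵥ A *ᵥ x) := by
    have : ((1 - δ) * (y ⬝ᵥ A *ᵥ y)) ^ 2 ≤ (y ⬝ᵥ (P - A) *ᵥ x) ^ 2 := by
      simpa only [neg_sq] using pow_le_pow_left₀ (mul_nonneg (by linarith) hy.le) hlow 2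
    refine le_of_mul_le_mul_right ?_ hy
    linarith
  have hle : y ⬝ᵥ A *ᵥ y ≤ (δ / (1 - δ)) ^ 2 * (x ⬝ᵥ A *ᵥ x) := by
    rw [div_pow, div_mul_eq_mul_div, le_div_iff₀ (pow_pos (by linarith) 2)]
    linarith
  calc mnorm A y ≤ √((δ / (1 - δ)) ^ 2 * (x ⬝ᵥ A *ᵥ x)) := Real.sqrt_le_sqrt hle
    _ = δ / (1 - δ) * mnorm A x := by rw [Real.sqrt_mul (sq_nonneg _), Real.sqrt_sq hk, mnorm]

end IsSpectralApprox
end Matrix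

/-- If `A = L_G + D` with `L_G` a (PSD) graph Laplacian, `D ≻ 0` diagonal, and `L_H`
is the Laplacian of a δ-spectral sparsifier of `G` with `δ ∈ (0,1/2)`, then
`P := L_H + D` is positive definite and `‖P⁻¹Ax − x‖_A ≤ 2δ‖x‖_A` for all `x`. -/
theorem sparsifier_preconditioner {n : ℕ} (LG LH : Matrix (Fin n) (Fin n) ℝ)
    (hLG : LG.PosSemidef) (hLH : LH.PosSemidef)
    (d : Fin n → ℝ) (hd : ∀ i, 0 < d i)
    (δ : ℝ) (hδ : 0 < δ) (hδ' : δ < 1 / 2)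
    (hsparse : ∀ x : Fin n → ℝ,
      (1 - δ) * (x ⬝ᵥ LG.mulVec x) ≤ x ⬝ᵥ LH.mulVec x ∧
        x ⬝ᵥ LH.mulVec x ≤ (1 + δ) * (x ⬝ᵥ LG.mulVec x))
    (A P : Matrix (Fin n) (Fin n) ℝ)
    (hA : A = LG + Matrix.diagonal d) (hPdef : P = LH + Matrix.diagonal d) :
    P.PosDef ∧ ∀ x : Fin n → ℝ,
      mnorm A (P⁻¹.mulVec (A.mulVec x) - x) ≤ 2 * δ * mnorm A x := by
  subst hA hPdef
  have hD : (diagonal d).PosDef := .diagonal hd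
  have hApd : (LG + diagonal d).PosDef := .posSemidef_add hLG hD
  have hPpd : (LH + diagonal d).PosDef := .posSemidef_add hLH hD
  have happrox : IsSpectralApprox δ (LG + diagonal d) (LH + diagonal d) :=
    IsSpectralApprox.add_posSemidef hsparse hD.posSemidef hδ.le
  refine ⟨hPpd, fun x => ?_⟩
  calc _ ≤ δ / (1 - δ) * mnorm _ x :=
        happrox.mnorm_inv_mulVec_sub_le (isHermitian_iff_isSymm.mp hApd.isHermitian)
          (isHermitian_iff_isSymm.mp hPpd.isHermitian) hPpd.det_pos.ne'.isUnit hδ.le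
          (by linarith) x
    _ ≤ 2 * δ * mnorm _ x := by
        gcongr
        · exact Real.sqrt_nonneg _
        · rw [div_le_iff₀ (by linarith)]
          nlinarith
end
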